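/- Let x ∈ A, let n' ∈ {1,…,N}, and let v ∈ 𝒳. Define z ∈ ℂ^{N+1} by z_{n'} = v and z_n = x_n for all n ≠ n'. Then for every u ∈ {1,…,U} and every real λ > 0, f_u(z) − f_u(x) + λ‖z‖₁ − λ‖x‖₁ ≥ −L_u·|v − x_{n'}| + λ·(1 − |x_{n'}|). -/

import Mathlib

open Complex Finset

noncomputable section

/-- The set of `K`-th roots of unity in `ℂ`. -/
def rootsSet (K : ℕ) : Set ℂ :=
  {z : ℂ | ∃ k : ℕ, k < K ∧ z = Complex.exp ((2 * Real.pi * k / K : ℝ) * Complex.I)}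

/-- The convex hull (over `ℝ`) of the `K`-th roots of unity. -/
def hullSet (K : ℕ) : Set ℂ := convexHull ℝ (rootsSet K)

/-- The relaxed feasible set `A`. -/
def feasA (K N : ℕ) : Set (Fin (N + 1) → ℂ) :=
  {x | x 0 = 1 ∧ ∀ n : Fin (N + 1), n ≠ 0 → x n ∈ hullSet K}

/-- The discrete feasible set `D`. -/
def feasD (K N : ℕ) : Set (Fin (N + 1) → ℂ) :=
  {x | x 0 = 1 ∧ ∀ n : Fin (N + 1), n ≠ 0 → x n ∈ rootsSet K}

/-- The ℓ1 norm of a complex vector. -/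
def norm1 {N : ℕ} (x : Fin (N + 1) → ℂ) : ℝ := ∑ n, ‖x n‖

/-- The ℓ2 norm of a complex vector. -/
def norm2 {N : ℕ} (x : Fin (N + 1) → ℂ) : ℝ := Real.sqrt (∑ n, ‖x n‖ ^ 2)

/-- The (real) quadratic form `x^H C x`. -/
def quadForm {N : ℕ} (C : Matrix (Fin (N + 1)) (Fin (N + 1)) ℂ)
    (x : Fin (N + 1) → ℂ) : ℝ :=
  (dotProduct (star x) (Matrix.mulVec C x)).re

/-- The Frobenius norm of a complex matrix. -/
def frobNorm {N : ℕ} (M : Matrix (Fin (N + 1)) (Fin (N + 1)) ℂ) : ℝ :=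
  Real.sqrt (∑ i, ∑ j, ‖M i j‖ ^ 2)

/-- The SINR-type objective `f_u`. -/
def fObj {N U : ℕ} (C : Fin U → Fin U → Matrix (Fin (N + 1)) (Fin (N + 1)) ℂ)
    (σ : Fin U → ℝ) (u : Fin U) (x : Fin (N + 1) → ℂ) : ℝ :=
  quadForm (C u u) x /
    ((∑ u' ∈ Finset.univ.erase u, quadForm (C u u') x) + σ u ^ 2)

/-- The Lipschitz constant `L_u`. -/
def Lconst {N U : ℕ} (C : Fin U → Fin U → Matrix (Fin (N + 1)) (Fin (N + 1)) ℂ)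
    (σ : Fin U → ℝ) (u : Fin U) : ℝ :=
  2 * Real.sqrt ((N : ℝ) + 1) * frobNorm (C u u) / σ u ^ 2 *
    (1 + ((N : ℝ) + 1) * frobNorm (∑ u' ∈ Finset.univ.erase u, C u u') / σ u ^ 2)

/-- The minimum of the `f_u` over all users. -/
def minObj {N U : ℕ} (C : Fin U → Fin U → Matrix (Fin (N + 1)) (Fin (N + 1)) ℂ)
    (σ : Fin U → ℝ) (x : Fin (N + 1) → ℂ) : ℝ :=
  ⨅ u : Fin U, fObj C σ u x

/-- The penalized objective `f_0`. -/
def f0 {N U : ℕ} (C : Fin U → Fin U → Matrix (Fin (N + 1)) (Fin (N + 1)) ℂ)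
    (σ : Fin U → ℝ) (lam : ℝ) (x : Fin (N + 1) → ℂ) : ℝ :=
  minObj C σ x + lam * norm1 x

/-! Moving one coordinate from `x n` to `v` perturbs each quadratic form `y ↦ yᴴ M y` by
`zᴴ M (v - x n) e_n + conj (v - x n) (M x)_n`, which Cauchy–Schwarz bounds by a column and a row
sum of `M`, hence by `2 √(N+1) ‖M‖_F |v - x n|`. Since both denominators of `f_u` are at least
`σ_u²` and its numerator is at most `(N+1) ‖C_uu‖_F`, this gives `|f_u(z) - f_u(x)| ≤ L_u |v - x n|`;
the ℓ¹ term changes by exactly `1 - |x n|` because `|v| = 1`. -/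

open Matrix
open scoped ComplexOrder

lemma norm_eq_one_of_mem_rootsSet {K : ℕ} {v : ℂ} (hv : v ∈ rootsSet K) : ‖v‖ = 1 := by
  obtain ⟨k, -, rfl⟩ := hv
  exact Complex.norm_exp_ofReal_mul_I _

lemma norm_le_one_of_mem_hullSet {K : ℕ} {z : ℂ} (hz : z ∈ hullSet K) : ‖z‖ ≤ 1 := by
  have hroots : rootsSet K ⊆ Metric.closedBall 0 1 := fun w hw ↦ by
    simp [norm_eq_one_of_mem_rootsSet hw]
  simpa using convexHull_min hroots (convex_closedBall 0 1) hz

lemma norm_le_one_of_mem_feasA {K N : ℕ} {x : Fin (N + 1) → ℂ} (hx : x ∈ feasA K N)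
    (n : Fin (N + 1)) : ‖x n‖ ≤ 1 := by
  obtain ⟨hx0, hxK⟩ := hx
  by_cases hn : n = 0
  · simp [hn, hx0]
  · exact norm_le_one_of_mem_hullSet (hxK n hn)

lemma norm1_update {N : ℕ} (x : Fin (N + 1) → ℂ) (n : Fin (N + 1)) (v : ℂ) :
    norm1 (Function.update x n v) = norm1 x - ‖x n‖ + ‖v‖ := by
  have hsplit : ∀ y : Fin (N + 1) → ℂ, norm1 y = ‖y n‖ + ∑ k ∈ univ.erase n, ‖y k‖ := fun y ↦
    (Finset.add_sum_erase _ _ (Finset.mem_univ n)).symm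
  rw [hsplit, hsplit x, Function.update_self]
  have hrest : ∑ k ∈ univ.erase n, ‖Function.update x n v k‖ = ∑ k ∈ univ.erase n, ‖x k‖ :=
    Finset.sum_congr rfl fun k hk ↦ by rw [Function.update_of_ne (Finset.ne_of_mem_erase hk)]
  rw [hrest]
  ring

lemma sum_le_sqrt_card_mul_sqrt_sum_sq {ι : Type*} (s : Finset ι) (f : ι → ℝ) :
    ∑ i ∈ s, f i ≤ √(#s : ℝ) * √(∑ i ∈ s, f i ^ 2) := by
  simpa [mul_comm] using Real.sum_mul_le_sqrt_mul_sqrt s f 1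

lemma norm_dotProduct_le_sum_norm {ι : Type*} [Fintype ι] {y : ι → ℂ} (hy : ∀ i, ‖y i‖ ≤ 1)
    (w : ι → ℂ) : ‖y ⬝ᵥ w‖ ≤ ∑ i, ‖w i‖ :=
  (norm_sum_le _ _).trans <| Finset.sum_le_sum fun i _ ↦ by
    rw [norm_mul]
    exact mul_le_of_le_one_left (norm_nonneg _) (hy i)

lemma abs_div_sub_div_le {P P' Q Q' s BP B1 B2 : ℝ} (hs : 0 < s) (hQ : s ≤ Q) (hQ' : s ≤ Q')
    (hP : |P| ≤ BP) (hPP' : |P' - P| ≤ B1) (hQQ' : |Q' - Q| ≤ B2) :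
    |P' / Q' - P / Q| ≤ B1 / s + BP * B2 / s ^ 2 := by
  have hQ0 : 0 < Q := hs.trans_le hQ
  have hQ0' : 0 < Q' := hs.trans_le hQ'
  have hsplit : P' / Q' - P / Q = (P' - P) / Q' + P * (Q - Q') / (Q * Q') := by
    field_simp
    ring
  have hfirst : |(P' - P) / Q'| ≤ B1 / s := by
    rw [abs_div, abs_of_pos hQ0']
    exact div_le_div₀ ((abs_nonneg _).trans hPP') hPP' hs hQ'
  have hsecond : |P * (Q - Q') / (Q * Q')| ≤ BP * B2 / s ^ 2 := by
    rw [abs_div, abs_mul, abs_sub_comm, abs_of_pos (mul_pos hQ0 hQ0'), sq]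
    exact div_le_div₀ (mul_nonneg ((abs_nonneg _).trans hP) ((abs_nonneg _).trans hQQ'))
      (mul_le_mul hP hQQ' (abs_nonneg _) ((abs_nonneg _).trans hP)) (mul_pos hs hs)
      (mul_le_mul hQ hQ' hs.le hQ0.le)
  rw [hsplit]
  exact (abs_add_le _ _).trans (add_le_add hfirst hsecond)

section Frobenius

variable {N : ℕ} (M : Matrix (Fin (N + 1)) (Fin (N + 1)) ℂ)

lemma frobNorm_transpose : frobNorm Mᵀ = frobNorm M := by
  rw [frobNorm, frobNorm, Finset.sum_comm]
  rfl

lemma sum_norm_col_le (n : Fin (N + 1)) : ∑ i, ‖M i n‖ ≤ √((N : ℝ) + 1) * frobNorm M := by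
  refine (sum_le_sqrt_card_mul_sqrt_sum_sq _ _).trans ?_
  simp only [Finset.card_univ, Fintype.card_fin, Nat.cast_add, Nat.cast_one, frobNorm]
  gcongr with i
  exact Finset.single_le_sum (fun j _ ↦ sq_nonneg ‖M i j‖) (Finset.mem_univ n)

lemma sum_norm_row_le (n : Fin (N + 1)) : ∑ j, ‖M n j‖ ≤ √((N : ℝ) + 1) * frobNorm M := by
  simpa [frobNorm_transpose] using sum_norm_col_le Mᵀ n

lemma sum_sum_norm_le : ∑ i, ∑ j, ‖M i j‖ ≤ ((N : ℝ) + 1) * frobNorm M := by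
  have h := sum_le_sqrt_card_mul_sqrt_sum_sq (Finset.univ ×ˢ Finset.univ)
    (fun p : Fin (N + 1) × Fin (N + 1) ↦ ‖M p.1 p.2‖)
  rw [Finset.sum_product, Finset.sum_product, Finset.card_product] at h
  simpa [frobNorm, Real.sqrt_mul_self (by positivity : (0 : ℝ) ≤ N + 1)] using h

end Frobenius

section QuadForm

variable {N : ℕ} (M : Matrix (Fin (N + 1)) (Fin (N + 1)) ℂ) (x : Fin (N + 1) → ℂ)

lemma quadForm_sum {ι : Type*} (s : Finset ι) (M : ι → Matrix (Fin (N + 1)) (Fin (N + 1)) ℂ) :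
    quadForm (∑ k ∈ s, M k) x = ∑ k ∈ s, quadForm (M k) x := by
  simp only [quadForm, Matrix.sum_mulVec, dotProduct_sum, Complex.re_sum]

lemma Matrix.PosSemidef.quadForm_nonneg {M : Matrix (Fin (N + 1)) (Fin (N + 1)) ℂ}
    (hM : M.PosSemidef) : 0 ≤ quadForm M x :=
  hM.re_dotProduct_nonneg x

variable {x}

lemma quadForm_le (hx : ∀ n, ‖x n‖ ≤ 1) : quadForm M x ≤ ((N : ℝ) + 1) * frobNorm M := by
  have hx' : ∀ n, ‖star x n‖ ≤ 1 := fun n ↦ (norm_star (x n)).trans_le (hx n)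
  calc quadForm M x ≤ ‖star x ⬝ᵥ M *ᵥ x‖ := Complex.re_le_norm _
    _ ≤ ∑ i, ‖(M *ᵥ x) i‖ := norm_dotProduct_le_sum_norm hx' _
    _ ≤ ∑ i, ∑ j, ‖M i j‖ := Finset.sum_le_sum fun i _ ↦ by
        rw [Matrix.mulVec, dotProduct_comm]
        exact norm_dotProduct_le_sum_norm hx _
    _ ≤ ((N : ℝ) + 1) * frobNorm M := sum_sum_norm_le M

lemma abs_quadForm_update_sub_le (hx : ∀ n, ‖x n‖ ≤ 1) (n : Fin (N + 1)) {v : ℂ} (hv : ‖v‖ ≤ 1) :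
    |quadForm M (Function.update x n v) - quadForm M x|
      ≤ 2 * √((N : ℝ) + 1) * frobNorm M * ‖v - x n‖ := by
  set z := Function.update x n v
  set d := v - x n
  have hz : ∀ k, ‖star z k‖ ≤ 1 := fun k ↦ by
    rw [Pi.star_apply, norm_star]
    rcases eq_or_ne k n with rfl | hk
    · simpa [z] using hv
    · simpa [z, hk] using hx k
  have hzx : z - x = Pi.single n d := by
    ext k
    rcases eq_or_ne k n with rfl | hk <;> simp [z, d, *]
  have hdiff : quadForm M z - quadForm M x
      = (star z ⬝ᵥ M *ᵥ Pi.single n d + star d * (M *ᵥ x) n).re := by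
    rw [← single_dotProduct, Pi.single_star, ← hzx]
    simp only [quadForm, ← Complex.sub_re, Matrix.mulVec_sub, dotProduct_sub, star_sub,
      sub_dotProduct]
    ring_nf
  have hcol : ‖star z ⬝ᵥ M *ᵥ Pi.single n d‖ ≤ √((N : ℝ) + 1) * frobNorm M * ‖d‖ := by
    have hsingle : M *ᵥ Pi.single n d = fun i ↦ M i n * d := by ext; simp
    calc ‖star z ⬝ᵥ M *ᵥ Pi.single n d‖ ≤ ∑ i, ‖M i n * d‖ := by
          rw [hsingle]
          exact norm_dotProduct_le_sum_norm hz _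
      _ ≤ √((N : ℝ) + 1) * frobNorm M * ‖d‖ := by
          simp_rw [norm_mul, ← Finset.sum_mul]
          gcongr
          exact sum_norm_col_le M n
  have hrow : ‖star d * (M *ᵥ x) n‖ ≤ √((N : ℝ) + 1) * frobNorm M * ‖d‖ := by
    rw [norm_mul, norm_star, mul_comm, Matrix.mulVec, dotProduct_comm]
    gcongr
    exact (norm_dotProduct_le_sum_norm hx _).trans (sum_norm_row_le M n)
  rw [hdiff]
  calc _ ≤ ‖star z ⬝ᵥ M *ᵥ Pi.single n d + star d * (M *ᵥ x) n‖ := Complex.abs_re_le_norm _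
    _ ≤ _ := (norm_add_le _ _).trans (by linarith)

end QuadForm

lemma abs_fObj_update_sub_le {N U : ℕ} {C : Fin U → Fin U → Matrix (Fin (N + 1)) (Fin (N + 1)) ℂ}
    {σ : Fin U → ℝ} {u : Fin U} (hC : ∀ u', (C u u').PosSemidef) (hσ : 0 < σ u)
    {x : Fin (N + 1) → ℂ} (hx : ∀ n, ‖x n‖ ≤ 1) (n : Fin (N + 1)) {v : ℂ} (hv : ‖v‖ ≤ 1) :
    |fObj C σ u (Function.update x n v) - fObj C σ u x| ≤ Lconst C σ u * ‖v - x n‖ := by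
  set I := ∑ u' ∈ univ.erase u, C u u'
  have hfObj : ∀ y, fObj C σ u y = quadForm (C u u) y / (quadForm I y + σ u ^ 2) := fun y ↦ by
    rw [fObj, quadForm_sum]
  have hden : ∀ y, σ u ^ 2 ≤ quadForm I y + σ u ^ 2 := fun y ↦ by
    rw [quadForm_sum]
    have := Finset.sum_nonneg fun u' (_ : u' ∈ univ.erase u) ↦ (hC u').quadForm_nonneg y
    linarith
  have hnum : |quadForm (C u u) x| ≤ ((N : ℝ) + 1) * frobNorm (C u u) := by
    rw [abs_of_nonneg ((hC u).quadForm_nonneg x)]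
    exact quadForm_le _ hx
  have hden_sub : |(quadForm I (Function.update x n v) + σ u ^ 2) - (quadForm I x + σ u ^ 2)|
      ≤ 2 * √((N : ℝ) + 1) * frobNorm I * ‖v - x n‖ := by
    rw [add_sub_add_right_eq_sub]
    exact abs_quadForm_update_sub_le I hx n hv
  rw [hfObj, hfObj]
  refine (abs_div_sub_div_le (by positivity) (hden _) (hden _) hnum
    (abs_quadForm_update_sub_le _ hx n hv) hden_sub).trans_eq ?_
  unfold Lconst
  ring

theorem stmt6_general
    (K N U : ℕ)
    (a : Fin U → Fin U → (Fin (N + 1) → ℂ))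
    (C : Fin U → Fin U → Matrix (Fin (N + 1)) (Fin (N + 1)) ℂ)
    (hC : ∀ u u' : Fin U, C u u' = Matrix.vecMulVec (a u u') (star (a u u')))
    (σ : Fin U → ℝ) (hσ : ∀ u, 0 < σ u)
    (x : Fin (N + 1) → ℂ) (hxA : x ∈ feasA K N)
    (n' : Fin (N + 1))
    (v : ℂ) (hv : v ∈ rootsSet K)
    (u : Fin U) (lam : ℝ) :
    fObj C σ u (Function.update x n' v) - fObj C σ u x +
        lam * norm1 (Function.update x n' v) - lam * norm1 x ≥
      -(Lconst C σ u) * ‖v - x n'‖ + lam * (1 - ‖x n'‖) := by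
  have hv1 := norm_eq_one_of_mem_rootsSet hv
  have hC_psd : ∀ u', (C u u').PosSemidef := fun u' ↦ by
    rw [hC]
    exact posSemidef_vecMulVec_self_star _
  have hf := abs_fObj_update_sub_le hC_psd (hσ u) (norm_le_one_of_mem_feasA hxA) n' hv1.le
  rw [norm1_update, hv1]
  linear_combination (abs_le.mp hf).1

theorem stmt6
    (K N U : ℕ) (hK : 2 ≤ K) (hN : 1 ≤ N) (hU : 1 ≤ U)
    (a : Fin U → Fin U → (Fin (N + 1) → ℂ))
    (C : Fin U → Fin U → Matrix (Fin (N + 1)) (Fin (N + 1)) ℂ)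
    (hC : ∀ u u' : Fin U, C u u' = Matrix.vecMulVec (a u u') (star (a u u')))
    (σ : Fin U → ℝ) (hσ : ∀ u, 0 < σ u)
    (x : Fin (N + 1) → ℂ) (hxA : x ∈ feasA K N)
    (n' : Fin (N + 1)) (hn' : n' ≠ 0)
    (v : ℂ) (hv : v ∈ rootsSet K)
    (u : Fin U) (lam : ℝ) (hlam : 0 < lam) :
    fObj C σ u (Function.update x n' v) - fObj C σ u x +
        lam * norm1 (Function.update x n' v) - lam * norm1 x ≥
      -(Lconst C σ u) * ‖v - x n'‖ + lam * (1 - ‖x n'‖) :=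
  stmt6_general K N U a C hC σ hσ x hxA n' v hv u lam
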